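/- arXiv:1609.00808 — 2 statements merged into one kernel-verified Lean document; each statement's English description precedes it below -/
import Mathlib

section
/- Let k ≥ 3 and let H be the graph obtained from the complete bipartite graph K_{k,k} by subdividing one edge. Then H has 2k+1 vertices, α(H) = k, χ'(H) = k+1, and H is k-critical. -/
open SimpleGraph Finset

def IsProperEdgeColoring {V : Type*} (G : SimpleGraph V) (n : ℕ) (c : Sym2 V → Fin n) : Prop :=
  ∀ e₁ ∈ G.edgeSet, ∀ e₂ ∈ G.edgeSet, e₁ ≠ e₂ → (∃ x, x ∈ e₁ ∧ x ∈ e₂) → c e₁ ≠ c e₂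

noncomputable def chromIndex {V : Type*} (G : SimpleGraph V) : ℕ :=
  sInf {n | ∃ c : Sym2 V → Fin n, IsProperEdgeColoring G n c}

def IsIndep {V : Type*} (G : SimpleGraph V) (s : Finset V) : Prop :=
  (s : Set V).Pairwise fun a b => ¬ G.Adj a b

noncomputable def indepNum {V : Type*} (G : SimpleGraph V) [Fintype V] : ℕ :=
  sSup {n | ∃ s : Finset V, IsIndep G s ∧ s.card = n}

def IsKCritical {V : Type*} (G : SimpleGraph V) [Fintype V] [DecidableEq V]
    [DecidableRel G.Adj] (k : ℕ) : Prop :=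
  G.maxDegree = k ∧ chromIndex G = k + 1 ∧
    ∀ e ∈ G.edgeSet, chromIndex (G.deleteEdges {e}) = k

def meredith {V : Type*} (G : SimpleGraph V) (v : V) (k : ℕ) (f : V → Fin k) :
    SimpleGraph ({w : V // w ≠ v} ⊕ (Fin k ⊕ Fin (k - 1))) :=
  SimpleGraph.fromRel fun x y =>
    match x, y with
    | .inl a, .inl b => G.Adj a.1 b.1
    | .inl a, .inr (.inl i) => G.Adj v a.1 ∧ f a.1 = i
    | .inr (.inl _), .inr (.inr _) => True
    | _, _ => False

noncomputable def edgesWithin {V : Type*} (G : SimpleGraph V) (Y : Finset V) : ℕ :=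
  {e ∈ G.edgeSet | ∀ x ∈ e, x ∈ Y}.ncard

/-- `K_{k,k}` with one edge (the one joining the two `0` vertices) subdivided. -/
def subdividedKkk (k : ℕ) : SimpleGraph ((Fin k ⊕ Fin k) ⊕ Unit) :=
  SimpleGraph.fromRel fun x y =>
    match x, y with
    | .inl (.inl i), .inl (.inr j) => ¬(i.val = 0 ∧ j.val = 0)
    | .inl (.inl i), .inr _ => i.val = 0
    | .inl (.inr j), .inr _ => j.val = 0
    | _, _ => False

set_option linter.unusedSectionVars false

namespace Stmt14

open Fin.NatCast Fin.CommRing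

set_option linter.unusedSectionVars false

variable {k : ℕ} [NeZero k]

abbrev V (k : ℕ) := (Fin k ⊕ Fin k) ⊕ Unit

abbrev L (i : Fin k) : V k := .inl (.inl i)
abbrev R (j : Fin k) : V k := .inl (.inr j)
abbrev U : V k := .inr ()

@[simp] lemma adj_LR {i j : Fin k} : (subdividedKkk k).Adj (L i) (R j) ↔ ¬(i = 0 ∧ j = 0) := by
  simp [subdividedKkk, SimpleGraph.fromRel_adj]

@[simp] lemma adj_RL {i j : Fin k} : (subdividedKkk k).Adj (R j) (L i) ↔ ¬(i = 0 ∧ j = 0) := by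
  rw [SimpleGraph.adj_comm]; exact adj_LR

@[simp] lemma adj_LU {i : Fin k} : (subdividedKkk k).Adj (L i) U ↔ i = 0 := by
  simp [subdividedKkk, SimpleGraph.fromRel_adj]

@[simp] lemma adj_UL {i : Fin k} : (subdividedKkk k).Adj U (L i) ↔ i = 0 := by
  rw [SimpleGraph.adj_comm]; exact adj_LU

@[simp] lemma adj_RU {j : Fin k} : (subdividedKkk k).Adj (R j) U ↔ j = 0 := by
  simp [subdividedKkk, SimpleGraph.fromRel_adj]

@[simp] lemma adj_UR {j : Fin k} : (subdividedKkk k).Adj U (R j) ↔ j = 0 := by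
  rw [SimpleGraph.adj_comm]; exact adj_RU

@[simp] lemma not_adj_LL {i i' : Fin k} : ¬ (subdividedKkk k).Adj (L i) (L i') := by
  simp [subdividedKkk, SimpleGraph.fromRel_adj]

@[simp] lemma not_adj_RR {j j' : Fin k} : ¬ (subdividedKkk k).Adj (R j) (R j') := by
  simp [subdividedKkk, SimpleGraph.fromRel_adj]

@[simp] lemma not_adj_UU : ¬ (subdividedKkk k).Adj U U := by
  simp

section Colorings

variable {W : Type*}

lemma proper_of (G : SimpleGraph W) (n : ℕ) (f : W → W → Fin n)
    (hsymm : ∀ x y, f x y = f y x)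
    (h : ∀ v x y, G.Adj v x → G.Adj v y → x ≠ y → f v x ≠ f v y) :
    IsProperEdgeColoring G n (Sym2.lift ⟨f, hsymm⟩) := by
  intro e₁ he₁ e₂ he₂ hne hsh
  obtain ⟨w, hw1, hw2⟩ := hsh
  induction e₁ using Sym2.inductionOn with | hf x₁ y₁ =>
  induction e₂ using Sym2.inductionOn with | hf x₂ y₂ =>
  rw [Sym2.mem_iff] at hw1 hw2
  rw [SimpleGraph.mem_edgeSet] at he₁ he₂
  have key : ∀ a b d : W, G.Adj a b → G.Adj a d → s(a, b) ≠ s(a, d) →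
      Sym2.lift ⟨f, hsymm⟩ s(a, b) ≠ Sym2.lift ⟨f, hsymm⟩ s(a, d) := by
    intro a b d hab had hne'
    simp only [Sym2.lift_mk]
    exact h a b d hab had (fun hbd => hne' (by rw [hbd]))
  rcases hw1 with rfl | rfl <;> rcases hw2 with rfl | rfl
  · exact key _ _ _ he₁ he₂ hne
  · rw [Sym2.eq_swap (a := x₂)] at *
    exact key _ _ _ he₁ he₂.symm hne
  · rw [Sym2.eq_swap (a := x₁)] at *
    exact key _ _ _ he₁.symm he₂ hne
  · rw [Sym2.eq_swap (a := x₁), Sym2.eq_swap (a := x₂)] at *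
    exact key _ _ _ he₁.symm he₂.symm hne

end Colorings

section Col

variable {n : ℕ}

/-- symmetric color function from `g` on cross edges and pendant colors `p`, `q`. -/
def colf (g : Fin k → Fin k → Fin n) (p q : Fin n) : V k → V k → Fin n := fun x y =>
  match x, y with
  | .inl (.inl i), .inl (.inr j) => g i j
  | .inl (.inr j), .inl (.inl i) => g i j
  | .inl (.inl _), .inr _ => p
  | .inr _, .inl (.inl _) => p
  | .inl (.inr _), .inr _ => q
  | .inr _, .inl (.inr _) => q
  | _, _ => p

lemma colf_symm (g : Fin k → Fin k → Fin n) (p q : Fin n) :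
    ∀ x y, colf g p q x y = colf g p q y x := by
  rintro (⟨i|j⟩|u) (⟨i'|j'⟩|u') <;> rfl

def col (g : Fin k → Fin k → Fin n) (p q : Fin n) : Sym2 (V k) → Fin n :=
  Sym2.lift ⟨colf g p q, colf_symm g p q⟩

lemma proper_col (G : SimpleGraph (V k)) (hsub : G ≤ subdividedKkk k)
    (g : Fin k → Fin k → Fin n) (p q : Fin n)
    (hrow : ∀ i j j', G.Adj (L i) (R j) → G.Adj (L i) (R j') → j ≠ j' → g i j ≠ g i j')
    (hcol : ∀ i i' j, G.Adj (L i) (R j) → G.Adj (L i') (R j) → i ≠ i' → g i j ≠ g i' j)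
    (hp : ∀ i j, G.Adj (L i) (R j) → G.Adj (L i) U → g i j ≠ p)
    (hq : ∀ i j, G.Adj (L i) (R j) → G.Adj (R j) U → g i j ≠ q)
    (hpq : G.Adj (L 0) U → G.Adj (R 0) U → p ≠ q) :
    IsProperEdgeColoring G n (col g p q) := by
  apply proper_of
  rintro (⟨v|v⟩|u) (⟨x|x⟩|ux) (⟨y|y⟩|uy) hvx hvy hxy
  · exact (not_adj_LL (hsub hvx)).elim
  · exact (not_adj_LL (hsub hvx)).elim
  · exact (not_adj_LL (hsub hvx)).elim
  · exact (not_adj_LL (hsub hvy)).elim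
  · exact hrow v x y hvx hvy (fun h => hxy (by rw [h]))
  · exact hp v x hvx hvy
  · exact (not_adj_LL (hsub hvy)).elim
  · exact fun h => hp v y hvy hvx h.symm
  · exact absurd rfl hxy
  · exact hcol x y v hvx.symm hvy.symm (fun h => hxy (by rw [h]))
  · exact (not_adj_RR (hsub hvy)).elim
  · exact hq x v hvx.symm hvy
  · exact (not_adj_RR (hsub hvx)).elim
  · exact (not_adj_RR (hsub hvx)).elim
  · exact (not_adj_RR (hsub hvx)).elim
  · exact fun h => hq y v hvy.symm hvx h.symm
  · exact (not_adj_RR (hsub hvy)).elim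
  · exact absurd rfl hxy
  · obtain rfl : x = 0 := adj_UL.mp (hsub hvx)
    obtain rfl : y = 0 := adj_UL.mp (hsub hvy)
    exact absurd rfl hxy
  · obtain rfl : x = 0 := adj_UL.mp (hsub hvx)
    obtain rfl : y = 0 := adj_UR.mp (hsub hvy)
    exact hpq hvx.symm hvy.symm
  · exact (not_adj_UU (hsub hvy)).elim
  · obtain rfl : x = 0 := adj_UR.mp (hsub hvx)
    obtain rfl : y = 0 := adj_UL.mp (hsub hvy)
    exact fun h => (hpq hvy.symm hvx.symm) h.symm
  · obtain rfl : x = 0 := adj_UR.mp (hsub hvx)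
    obtain rfl : y = 0 := adj_UR.mp (hsub hvy)
    exact absurd rfl hxy
  · exact (not_adj_UU (hsub hvy)).elim
  · exact (not_adj_UU (hsub hvx)).elim
  · exact (not_adj_UU (hsub hvx)).elim
  · exact (not_adj_UU (hsub hvx)).elim

end Col

section Edges

lemma edge_cases {e : Sym2 (V k)} (he : e ∈ (subdividedKkk k).edgeSet) :
    (∃ i j : Fin k, ¬(i = 0 ∧ j = 0) ∧ e = s(L i, R j)) ∨ e = s(L 0, U) ∨ e = s(R 0, U) := by
  induction e using Sym2.inductionOn with | hf x y =>
  rw [SimpleGraph.mem_edgeSet] at he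
  rcases x with (⟨i|j⟩|u) <;> rcases y with (⟨i'|j'⟩|u')
  · exact (not_adj_LL he).elim
  · exact Or.inl ⟨i, j', adj_LR.mp he, rfl⟩
  · obtain rfl : i = 0 := adj_LU.mp he
    exact Or.inr (Or.inl rfl)
  · refine Or.inl ⟨i', j, adj_LR.mp he.symm, ?_⟩
    rw [Sym2.eq_swap]
  · exact (not_adj_RR he).elim
  · obtain rfl : j = 0 := adj_RU.mp he
    exact Or.inr (Or.inr rfl)
  · obtain rfl : i' = 0 := adj_UL.mp he
    exact Or.inr (Or.inl (Sym2.eq_swap))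
  · obtain rfl : j' = 0 := adj_UR.mp he
    exact Or.inr (Or.inr (Sym2.eq_swap))
  · exact (not_adj_UU he).elim

def LR (p : Fin k × Fin k) : Sym2 (V k) := s(L p.1, R p.2)

lemma LR_inj : Function.Injective (LR (k := k)) := by
  intro p q h
  simp only [LR, Sym2.eq_iff] at h
  rcases h with ⟨h1, h2⟩ | ⟨h1, h2⟩
  · simp only [Sum.inl.injEq, Sum.inl.injEq, Sum.inr.injEq] at h1 h2
    exact Prod.ext h1 h2
  · simp at h1

lemma edgeFinset_subdivided [Fintype ((subdividedKkk k).edgeSet)] :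
    (subdividedKkk k).edgeFinset =
      ((Finset.univ ×ˢ Finset.univ).erase ((0 : Fin k), (0 : Fin k))).image LR
        ∪ {s(L 0, U), s(R 0, U)} := by
  ext e
  simp only [SimpleGraph.mem_edgeFinset, Finset.mem_union, Finset.mem_image,
    Finset.mem_erase, Finset.mem_product, Finset.mem_univ, and_true, true_and,
    Finset.mem_insert, Finset.mem_singleton]
  constructor
  · intro he
    rcases edge_cases he with ⟨i, j, hij, rfl⟩ | rfl | rfl
    · exact Or.inl ⟨(i, j), by simpa [Prod.ext_iff] using (fun h1 h2 => hij ⟨h1, h2⟩), rfl⟩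
    · exact Or.inr (Or.inl rfl)
    · exact Or.inr (Or.inr rfl)
  · rintro (⟨⟨i, j⟩, hij, rfl⟩ | rfl | rfl)
    · exact (SimpleGraph.mem_edgeSet _).mpr (adj_LR.mpr (by simpa [Prod.ext_iff] using hij))
    · exact (SimpleGraph.mem_edgeSet _).mpr (adj_LU.mpr rfl)
    · exact (SimpleGraph.mem_edgeSet _).mpr (adj_RU.mpr rfl)

lemma pendant_ne_LR (p : Fin k × Fin k) (i : Fin k) :
    LR p ≠ s(L i, U) ∧ LR p ≠ s(R i, U) := by
  constructor <;>
  · intro h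
    have hU : (U : V k) ∈ LR p := by rw [h]; simp
    simp [LR, Sym2.mem_iff] at hU

lemma card_edgeFinset_subdivided [Fintype ((subdividedKkk k).edgeSet)] :
    (subdividedKkk k).edgeFinset.card = k * k + 1 := by
  classical
  rw [edgeFinset_subdivided]
  rw [Finset.card_union_of_disjoint]
  · rw [Finset.card_image_of_injective _ LR_inj, Finset.card_erase_of_mem (by simp),
      Finset.card_product, Finset.card_univ, Fintype.card_fin]
    have h2 : ({s(L (0:Fin k), U), s(R (0:Fin k), U)} : Finset (Sym2 (V k))).card = 2 := by
      rw [Finset.card_insert_of_notMem (by simp [Sym2.eq_iff]), Finset.card_singleton]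
    rw [h2]
    have : 1 ≤ k * k := Nat.one_le_iff_ne_zero.mpr (by
      have := NeZero.ne k; positivity)
    omega
  · rw [Finset.disjoint_left]
    rintro e he1 he2
    simp only [Finset.mem_image] at he1
    obtain ⟨p, _, rfl⟩ := he1
    simp only [Finset.mem_insert, Finset.mem_singleton] at he2
    rcases he2 with h | h
    · exact (pendant_ne_LR p 0).1 h
    · exact (pendant_ne_LR p 0).2 h

lemma card_V : Fintype.card (V k) = 2 * k + 1 := by
  simp [Fintype.card_sum]; omega

lemma card_le_of_proper (G : SimpleGraph (V k)) [Fintype G.edgeSet] {n : ℕ}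
    (c : Sym2 (V k) → Fin n) (hc : IsProperEdgeColoring G n c) :
    G.edgeFinset.card ≤ n * k := by
  classical
  have h1 : G.edgeFinset.card
      = ∑ m : Fin n, (G.edgeFinset.filter (fun e => c e = m)).card :=
    Finset.card_eq_sum_card_fiberwise (fun e _ => Finset.mem_univ (c e))
  have h2 : ∀ m : Fin n, (G.edgeFinset.filter (fun e => c e = m)).card ≤ k := by
    intro m
    set M := G.edgeFinset.filter (fun e => c e = m) with hM
    set ends : Sym2 (V k) → Finset (V k) := fun e => Finset.univ.filter (· ∈ e) with hends
    have hdisj : ∀ e₁ ∈ M, ∀ e₂ ∈ M, e₁ ≠ e₂ → Disjoint (ends e₁) (ends e₂) := by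
      intro e₁ h1' e₂ h2' hne
      rw [Finset.disjoint_left]
      intro a ha1 ha2
      simp only [hends, Finset.mem_filter, Finset.mem_univ, true_and] at ha1 ha2
      simp only [hM, Finset.mem_filter, SimpleGraph.mem_edgeFinset] at h1' h2'
      exact hc e₁ h1'.1 e₂ h2'.1 hne ⟨a, ha1, ha2⟩ (by rw [h1'.2, h2'.2])
    have hcard2 : ∀ e ∈ M, (ends e).card = 2 := by
      intro e heM
      have heE : e ∈ G.edgeSet := by
        simp only [hM, Finset.mem_filter, SimpleGraph.mem_edgeFinset] at heM
        exact heM.1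
      have hnd := SimpleGraph.not_isDiag_of_mem_edgeSet G heE
      induction e using Sym2.inductionOn with | hf x y =>
      have hxy : x ≠ y := by simpa [Sym2.mk_isDiag_iff] using hnd
      have : ends s(x, y) = {x, y} := by
        ext a
        simp [hends, Sym2.mem_iff]
      rw [this, Finset.card_insert_of_notMem (by simpa using hxy), Finset.card_singleton]
    have hb : (M.biUnion ends).card = ∑ e ∈ M, (ends e).card := Finset.card_biUnion hdisj
    have hsum : ∑ e ∈ M, (ends e).card = 2 * M.card := by
      rw [Finset.sum_congr rfl hcard2, Finset.sum_const, smul_eq_mul, mul_comm]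
    have hle : (M.biUnion ends).card ≤ 2 * k + 1 := by
      calc (M.biUnion ends).card ≤ Fintype.card (V k) := Finset.card_le_univ _
        _ = 2 * k + 1 := card_V
    omega
  calc G.edgeFinset.card = ∑ m : Fin n, (G.edgeFinset.filter (fun e => c e = m)).card := h1
    _ ≤ ∑ _m : Fin n, k := Finset.sum_le_sum (fun m _ => h2 m)
    _ = n * k := by simp [Finset.sum_const, Finset.card_univ]

end Edges

section CI

lemma proper_cast {W : Type*} (G : SimpleGraph W) {m n : ℕ} (h : m ≤ n)
    (c : Sym2 W → Fin m) (hc : IsProperEdgeColoring G m c) :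
    IsProperEdgeColoring G n (Fin.castLE h ∘ c) :=
  fun e₁ h1 e₂ h2 hne hsh heq =>
    hc e₁ h1 e₂ h2 hne hsh (Fin.castLE_injective h heq)

lemma chromIndex_eq {W : Type*} (G : SimpleGraph W) (m : ℕ)
    (h1 : ∃ c : Sym2 W → Fin (m + 1), IsProperEdgeColoring G (m + 1) c)
    (h2 : ¬∃ c : Sym2 W → Fin m, IsProperEdgeColoring G m c) :
    chromIndex G = m + 1 := by
  refine le_antisymm (Nat.sInf_le h1) (le_csInf ⟨_, h1⟩ ?_)
  rintro b ⟨c, hc⟩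
  by_contra hb
  push_neg at hb
  exact h2 ⟨_, proper_cast G (show b ≤ m by omega) c hc⟩

end CI

section Consts

lemma consts (hk : 3 ≤ k) :
    (1 : Fin k) ≠ 0 ∧ (-1 : Fin k) ≠ 0 ∧ (-2 : Fin k) ≠ 0 ∧ (-1 : Fin k) ≠ -2 := by
  obtain ⟨m, rfl⟩ : ∃ m, k = m + 3 := ⟨k - 3, by omega⟩
  have h1 : (1 : Fin (m + 3)) ≠ 0 := one_ne_zero
  have h2 : (2 : Fin (m + 3)) ≠ 0 := by
    intro h
    have h' : ((2 : ℕ) : Fin (m + 3)) = 0 := by exact_mod_cast h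
    rw [Fin.natCast_eq_zero] at h'
    have := Nat.le_of_dvd (by norm_num) h'
    omega
  refine ⟨h1, neg_ne_zero.mpr h1, neg_ne_zero.mpr h2, ?_⟩
  intro h
  have h' : (1 : Fin (m + 3)) = 2 := neg_inj.mp h
  have h'' : (1 : Fin (m + 3)) - 2 = 0 := sub_eq_zero.mpr h'
  rw [show (1 : Fin (m + 3)) - 2 = -1 by ring] at h''
  exact (neg_ne_zero.mpr h1) h''

end Consts

section ColoringsExist

/-- base color pattern for the hard case -/
def F (x y : Fin k) : Fin k :=
  if x = 0 ∧ y = -1 then 0 else if x = 1 ∧ y = -1 then -1 else x + y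

lemma F_other {x y : Fin k} (hy : y ≠ -1) : F x y = x + y := by
  unfold F
  rw [if_neg (fun h => hy h.2), if_neg (fun h => hy h.2)]

lemma F_00 : F (0 : Fin k) (-1) = 0 := by
  unfold F
  rw [if_pos ⟨rfl, rfl⟩]

lemma F_1m1 (h10 : (1 : Fin k) ≠ 0) : F (1 : Fin k) (-1) = -1 := by
  unfold F
  rw [if_neg (fun h => h10 h.1), if_pos ⟨rfl, rfl⟩]

lemma F_m1 {x : Fin k} (hx0 : x ≠ 0) (hx1 : x ≠ 1) : F x (-1) = x + -1 := by
  unfold F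
  rw [if_neg (fun h => hx0 h.1), if_neg (fun h => hx1 h.1)]

lemma Finj_row_aux (hk : 3 ≤ k) (x y' : Fin k)
    (hD' : ¬(x = 0 ∧ y' = 0)) (hE' : ¬(x = 1 ∧ y' = -2)) (hy' : y' ≠ -1) :
    F x (-1) ≠ F x y' := by
  obtain ⟨h1, hm1, hm2, hm12⟩ := consts hk
  rw [F_other hy']
  by_cases hx0 : x = 0
  · subst hx0
    rw [F_00, zero_add]
    exact fun h => hD' ⟨rfl, h.symm⟩
  · by_cases hx1 : x = 1
    · subst hx1
      rw [F_1m1 h1]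
      intro h
      exact hE' ⟨rfl, by linear_combination -h⟩
    · rw [F_m1 hx0 hx1]
      exact fun h => hy' (add_left_cancel h).symm

lemma Finj_row (hk : 3 ≤ k) (x y y' : Fin k)
    (hD1 : ¬(x = 0 ∧ y = 0)) (hE1 : ¬(x = 1 ∧ y = -2))
    (hD1' : ¬(x = 0 ∧ y' = 0)) (hE1' : ¬(x = 1 ∧ y' = -2))
    (hne : y ≠ y') : F x y ≠ F x y' := by
  by_cases hy : y = -1
  · subst hy
    exact Finj_row_aux hk x y' hD1' hE1' (fun h => hne h.symm)
  · by_cases hy' : y' = -1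
    · subst hy'
      exact (Finj_row_aux hk x y hD1 hE1 hy).symm
    · rw [F_other hy, F_other hy']
      exact fun h => hne (add_left_cancel h)

lemma Finj_col (hk : 3 ≤ k) (x x' y : Fin k) (hne : x ≠ x') : F x y ≠ F x' y := by
  obtain ⟨h1, hm1, hm2, hm12⟩ := consts hk
  by_cases hy : y = -1
  · subst hy
    have key : ∀ z w : Fin k, z ≠ w → z = 0 → F z (-1) ≠ F w (-1) := by
      intro z w hzw hz0
      subst hz0
      rw [F_00]
      by_cases hw1 : w = 1
      · subst hw1; rw [F_1m1 h1]; exact hm1.symm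
      · rw [F_m1 (fun h => hzw h.symm) hw1]
        intro h
        exact hw1 (by linear_combination -h)
    by_cases hx0 : x = 0
    · exact key x x' hne hx0
    · by_cases hx0' : x' = 0
      · exact (key x' x (fun h => hne h.symm) hx0').symm
      · have key1 : ∀ z w : Fin k, z ≠ w → z = 1 → w ≠ 0 → F z (-1) ≠ F w (-1) := by
          intro z w hzw hz1 hw0
          subst hz1
          rw [F_1m1 h1]
          have hw1 : w ≠ 1 := fun h => hzw h.symm
          rw [F_m1 hw0 hw1]
          intro h
          exact hw0 (by linear_combination -h)
        by_cases hx1 : x = 1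
        · exact key1 x x' hne hx1 hx0'
        · by_cases hx1' : x' = 1
          · exact (key1 x' x (fun h => hne h.symm) hx1' hx0).symm
          · rw [F_m1 hx0 hx1, F_m1 hx0' hx1']
            exact fun h => hne (add_right_cancel h)
  · rw [F_other hy, F_other hy]
    exact fun h => hne (add_right_cancel h)

lemma F_row0_ne (hk : 3 ≤ k) (y : Fin k) (hy : y ≠ 0) : F 0 y ≠ -1 := by
  obtain ⟨h1, hm1, hm2, hm12⟩ := consts hk
  by_cases hym : y = -1
  · subst hym; rw [F_00]; exact hm1.symm
  · rw [F_other hym, zero_add]; exact hym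

lemma F_col0_ne (hk : 3 ≤ k) (x : Fin k) (hx : x ≠ 0) : F x 0 ≠ 0 := by
  obtain ⟨h1, hm1, hm2, hm12⟩ := consts hk
  rw [F_other (fun h => hm1 h.symm), add_zero]
  exact hx

end ColoringsExist

section Exist

lemma LR_eq_LR {i j a b : Fin k} : s(L i, R j) = s(L a, R b) ↔ i = a ∧ j = b := by
  rw [Sym2.eq_iff]
  constructor
  · rintro (⟨h1, h2⟩ | ⟨h1, h2⟩)
    · exact ⟨by simpa using h1, by simpa using h2⟩
    · simp at h1
  · rintro ⟨rfl, rfl⟩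
    exact Or.inl ⟨rfl, rfl⟩

lemma del_adj_LR {e : Sym2 (V k)} {i j : Fin k}
    (h : ((subdividedKkk k).deleteEdges {e}).Adj (L i) (R j)) :
    ¬(i = 0 ∧ j = 0) ∧ s(L i, R j) ≠ e := by
  rw [SimpleGraph.deleteEdges_adj] at h
  exact ⟨adj_LR.mp h.1, by simpa using h.2⟩

lemma del_adj_LU {e : Sym2 (V k)} {i : Fin k}
    (h : ((subdividedKkk k).deleteEdges {e}).Adj (L i) U) :
    i = 0 ∧ s(L i, U) ≠ e := by
  rw [SimpleGraph.deleteEdges_adj] at h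
  exact ⟨adj_LU.mp h.1, by simpa using h.2⟩

lemma del_adj_RU {e : Sym2 (V k)} {j : Fin k}
    (h : ((subdividedKkk k).deleteEdges {e}).Adj (R j) U) :
    j = 0 ∧ s(R j, U) ≠ e := by
  rw [SimpleGraph.deleteEdges_adj] at h
  exact ⟨adj_RU.mp h.1, by simpa using h.2⟩

/-- the (k+1)-coloring of the whole graph -/
lemma exists_col_full (hk : 3 ≤ k) :
    ∃ c : Sym2 (V k) → Fin (k + 1), IsProperEdgeColoring (subdividedKkk k) (k + 1) c := by
  refine ⟨col (fun i j => Fin.castSucc (i + j)) (Fin.last k) (Fin.castSucc 0),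
    proper_col _ le_rfl _ _ _ ?_ ?_ ?_ ?_ ?_⟩
  · intro i j j' h h' hne heq
    exact hne (add_left_cancel (Fin.castSucc_injective _ heq))
  · intro i i' j h h' hne heq
    exact hne (add_right_cancel (Fin.castSucc_injective _ heq))
  · intro i j _ _
    exact (Fin.castSucc_lt_last _).ne
  · intro i j h hU
    have hj : j = 0 := adj_RU.mp hU
    subst hj
    have hi : i ≠ 0 := fun h0 => (adj_LR.mp h) ⟨h0, rfl⟩
    intro heq
    exact hi (by simpa using Fin.castSucc_injective _ heq)
  · intro _ _
    exact (Fin.castSucc_lt_last _).ne.symm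

/-- delete a pendant edge at L side -/
lemma exists_col_delLU (hk : 3 ≤ k) :
    ∃ c : Sym2 (V k) → Fin k,
      IsProperEdgeColoring ((subdividedKkk k).deleteEdges {s(L 0, U)}) k c := by
  refine ⟨col (fun i j => i + j) 0 0,
    proper_col _ (SimpleGraph.deleteEdges_le _) _ _ _ ?_ ?_ ?_ ?_ ?_⟩
  · intro i j j' _ _ hne heq
    exact hne (add_left_cancel heq)
  · intro i i' j _ _ hne heq
    exact hne (add_right_cancel heq)
  · intro i j h hU
    obtain ⟨rfl, hne⟩ := del_adj_LU hU
    exact absurd rfl hne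
  · intro i j h hU
    obtain ⟨rfl, _⟩ := del_adj_RU hU
    obtain ⟨hnz, _⟩ := del_adj_LR h
    rw [add_zero]
    exact fun h0 => hnz ⟨h0, rfl⟩
  · intro hU _
    obtain ⟨_, hne⟩ := del_adj_LU hU
    exact absurd rfl hne

lemma exists_col_delRU (hk : 3 ≤ k) :
    ∃ c : Sym2 (V k) → Fin k,
      IsProperEdgeColoring ((subdividedKkk k).deleteEdges {s(R 0, U)}) k c := by
  refine ⟨col (fun i j => i + j) 0 0,
    proper_col _ (SimpleGraph.deleteEdges_le _) _ _ _ ?_ ?_ ?_ ?_ ?_⟩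
  · intro i j j' _ _ hne heq
    exact hne (add_left_cancel heq)
  · intro i i' j _ _ hne heq
    exact hne (add_right_cancel heq)
  · intro i j h hU
    obtain ⟨rfl, _⟩ := del_adj_LU hU
    obtain ⟨hnz, _⟩ := del_adj_LR h
    rw [zero_add]
    exact fun h0 => hnz ⟨rfl, h0⟩
  · intro i j h hU
    obtain ⟨rfl, hne⟩ := del_adj_RU hU
    exact absurd rfl hne
  · intro _ hU
    obtain ⟨_, hne⟩ := del_adj_RU hU
    exact absurd rfl hne

/-- delete an edge incident to L0 -/
lemma exists_col_delL0 (hk : 3 ≤ k) (b : Fin k) (hb : b ≠ 0) :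
    ∃ c : Sym2 (V k) → Fin k,
      IsProperEdgeColoring ((subdividedKkk k).deleteEdges {s(L 0, R b)}) k c := by
  refine ⟨col (fun i j => i + j) b 0,
    proper_col _ (SimpleGraph.deleteEdges_le _) _ _ _ ?_ ?_ ?_ ?_ ?_⟩
  · intro i j j' _ _ hne heq
    exact hne (add_left_cancel heq)
  · intro i i' j _ _ hne heq
    exact hne (add_right_cancel heq)
  · intro i j h hU
    obtain ⟨rfl, _⟩ := del_adj_LU hU
    obtain ⟨_, hne⟩ := del_adj_LR h
    rw [zero_add]
    exact fun hj => hne (by rw [hj])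
  · intro i j h hU
    obtain ⟨rfl, _⟩ := del_adj_RU hU
    obtain ⟨hnz, _⟩ := del_adj_LR h
    rw [add_zero]
    exact fun h0 => hnz ⟨h0, rfl⟩
  · intro _ _
    exact hb

lemma exists_col_delR0 (hk : 3 ≤ k) (a : Fin k) (ha : a ≠ 0) :
    ∃ c : Sym2 (V k) → Fin k,
      IsProperEdgeColoring ((subdividedKkk k).deleteEdges {s(L a, R 0)}) k c := by
  refine ⟨col (fun i j => i + j) 0 a,
    proper_col _ (SimpleGraph.deleteEdges_le _) _ _ _ ?_ ?_ ?_ ?_ ?_⟩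
  · intro i j j' _ _ hne heq
    exact hne (add_left_cancel heq)
  · intro i i' j _ _ hne heq
    exact hne (add_right_cancel heq)
  · intro i j h hU
    obtain ⟨rfl, _⟩ := del_adj_LU hU
    obtain ⟨hnz, _⟩ := del_adj_LR h
    rw [zero_add]
    exact fun h0 => hnz ⟨rfl, h0⟩
  · intro i j h hU
    obtain ⟨rfl, _⟩ := del_adj_RU hU
    obtain ⟨_, hne⟩ := del_adj_LR h
    rw [add_zero]
    exact fun hi => hne (by rw [hi])
  · intro _ _
    exact ha.symm

/-- the hard case: delete an interior K_{k,k} edge -/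
lemma exists_col_delLR (hk : 3 ≤ k) (a b : Fin k) (ha : a ≠ 0) (hb : b ≠ 0) :
    ∃ c : Sym2 (V k) → Fin k,
      IsProperEdgeColoring ((subdividedKkk k).deleteEdges {s(L a, R b)}) k c := by
  obtain ⟨h1, hm1, hm2, hm12⟩ := consts hk
  set s' : Equiv.Perm (Fin k) := Equiv.swap 1 a with hs'
  set t' : Equiv.Perm (Fin k) := Equiv.swap (-2) b with ht'
  have hs0 : s' 0 = 0 :=
    Equiv.swap_apply_of_ne_of_ne (fun h => h1 h.symm) (fun h => ha h.symm)
  have ht0 : t' 0 = 0 :=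
    Equiv.swap_apply_of_ne_of_ne (fun h => hm2 h.symm) (fun h => hb h.symm)
  have hsa : s' a = 1 := Equiv.swap_apply_right _ _
  have htb : t' b = -2 := Equiv.swap_apply_right _ _
  have hsinj := s'.injective
  have htinj := t'.injective
  have hs_zero : ∀ i : Fin k, s' i = 0 → i = 0 := fun i h => hsinj (h.trans hs0.symm)
  have ht_zero : ∀ j : Fin k, t' j = 0 → j = 0 := fun j h => htinj (h.trans ht0.symm)
  have hs_one : ∀ i : Fin k, s' i = 1 → i = a := fun i h => hsinj (h.trans hsa.symm)
  have ht_two : ∀ j : Fin k, t' j = -2 → j = b := fun j h => htinj (h.trans htb.symm)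
  refine ⟨col (fun i j => F (s' i) (t' j)) (-1) 0,
    proper_col _ (SimpleGraph.deleteEdges_le _) _ _ _ ?_ ?_ ?_ ?_ ?_⟩
  · intro i j j' h h' hne
    obtain ⟨hnz, hneq⟩ := del_adj_LR h
    obtain ⟨hnz', hneq'⟩ := del_adj_LR h'
    refine Finj_row hk (s' i) (t' j) (t' j') ?_ ?_ ?_ ?_ (fun hh => hne (htinj hh))
    · rintro ⟨hx, hy⟩
      exact hnz ⟨hs_zero i hx, ht_zero j hy⟩
    · rintro ⟨hx, hy⟩
      exact hneq (LR_eq_LR.mpr ⟨hs_one i hx, ht_two j hy⟩)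
    · rintro ⟨hx, hy⟩
      exact hnz' ⟨hs_zero i hx, ht_zero j' hy⟩
    · rintro ⟨hx, hy⟩
      exact hneq' (LR_eq_LR.mpr ⟨hs_one i hx, ht_two j' hy⟩)
  · intro i i' j h h' hne
    exact Finj_col hk (s' i) (s' i') (t' j) (fun hh => hne (hsinj hh))
  · intro i j h hU
    obtain ⟨rfl, _⟩ := del_adj_LU hU
    obtain ⟨hnz, _⟩ := del_adj_LR h
    rw [hs0]
    exact F_row0_ne hk (t' j) (fun hj => (hnz ⟨rfl, ht_zero j hj⟩))
  · intro i j h hU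
    obtain ⟨rfl, _⟩ := del_adj_RU hU
    obtain ⟨hnz, _⟩ := del_adj_LR h
    rw [ht0]
    exact F_col0_ne hk (s' i) (fun hi => (hnz ⟨hs_zero i hi, rfl⟩))
  · intro _ _
    exact hm1

end Exist

section CIcomp

lemma chromIndex_eq' {W : Type*} (G : SimpleGraph W) {n : ℕ} (hn : 0 < n)
    (h1 : ∃ c : Sym2 W → Fin n, IsProperEdgeColoring G n c)
    (h2 : ¬∃ c : Sym2 W → Fin (n - 1), IsProperEdgeColoring G (n - 1) c) :
    chromIndex G = n := by
  obtain ⟨m, rfl⟩ : ∃ m, n = m + 1 := ⟨n - 1, by omega⟩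
  exact chromIndex_eq G m h1 (by simpa using h2)

lemma chromIndex_subdivided (hk : 3 ≤ k) : chromIndex (subdividedKkk k) = k + 1 := by
  classical
  letI : Fintype ((subdividedKkk k).edgeSet) := Fintype.ofFinite _
  refine chromIndex_eq' _ (by omega) (exists_col_full hk) ?_
  rintro ⟨c, hc⟩
  have hle := card_le_of_proper _ c hc
  rw [card_edgeFinset_subdivided] at hle
  simp only [Nat.add_sub_cancel] at hle
  omega

lemma edgeFinset_delete [Fintype ((subdividedKkk k).edgeSet)]
    (e : Sym2 (V k)) [Fintype (((subdividedKkk k).deleteEdges {e}).edgeSet)] :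
    ((subdividedKkk k).deleteEdges {e}).edgeFinset = (subdividedKkk k).edgeFinset.erase e := by
  ext e'
  simp only [SimpleGraph.mem_edgeFinset, SimpleGraph.edgeSet_deleteEdges, Set.mem_diff,
    Set.mem_singleton_iff, Finset.mem_erase]
  tauto

lemma chromIndex_delete (hk : 3 ≤ k) (e : Sym2 (V k))
    (he : e ∈ (subdividedKkk k).edgeSet)
    (hex : ∃ c : Sym2 (V k) → Fin k,
      IsProperEdgeColoring ((subdividedKkk k).deleteEdges {e}) k c) :
    chromIndex ((subdividedKkk k).deleteEdges {e}) = k := by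
  classical
  letI : Fintype ((subdividedKkk k).edgeSet) := Fintype.ofFinite _
  letI : Fintype (((subdividedKkk k).deleteEdges {e}).edgeSet) := Fintype.ofFinite _
  refine chromIndex_eq' _ (by omega) hex ?_
  rintro ⟨c, hc⟩
  have hle := card_le_of_proper _ c hc
  have hcard : ((subdividedKkk k).deleteEdges {e}).edgeFinset.card = k * k := by
    rw [edgeFinset_delete, Finset.card_erase_of_mem (SimpleGraph.mem_edgeFinset.mpr he),
      card_edgeFinset_subdivided]
    omega
  rw [hcard, Nat.sub_mul, one_mul] at hle
  have hkk : k ≤ k * k := Nat.le_mul_of_pos_left k (by omega)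
  omega

lemma chromIndex_delete_all (hk : 3 ≤ k) (e : Sym2 (V k))
    (he : e ∈ (subdividedKkk k).edgeSet) :
    chromIndex ((subdividedKkk k).deleteEdges {e}) = k := by
  rcases edge_cases he with ⟨i, j, hij, rfl⟩ | rfl | rfl
  · by_cases hi : i = 0
    · subst hi
      have hj : j ≠ 0 := fun h => hij ⟨rfl, h⟩
      exact chromIndex_delete hk _ he (exists_col_delL0 hk j hj)
    · by_cases hj : j = 0
      · subst hj
        exact chromIndex_delete hk _ he (exists_col_delR0 hk i hi)
      · exact chromIndex_delete hk _ he (exists_col_delLR hk i j hi hj)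
  · exact chromIndex_delete hk _ he (exists_col_delLU hk)
  · exact chromIndex_delete hk _ he (exists_col_delRU hk)

end CIcomp

section Deg

lemma R_inj : Function.Injective (R (k := k)) := fun x y h => by simpa using h

lemma L_inj : Function.Injective (L (k := k)) := fun x y h => by simpa using h

lemma degree_le (hk : 3 ≤ k) [DecidableRel (subdividedKkk k).Adj] (v : V k) :
    (subdividedKkk k).degree v ≤ k := by
  classical
  rw [← SimpleGraph.card_neighborFinset_eq_degree]
  rcases v with (⟨i|j⟩|u)
  · by_cases hi : i = 0
    · subst hi
      have hsub : (subdividedKkk k).neighborFinset (L 0) ⊆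
          insert U ((Finset.univ.erase (0 : Fin k)).image (R (k := k))) := by
        intro w hw
        rw [SimpleGraph.mem_neighborFinset] at hw
        rcases w with (⟨i'|j'⟩|u')
        · exact (not_adj_LL hw).elim
        · refine Finset.mem_insert_of_mem (Finset.mem_image.mpr
            ⟨j', Finset.mem_erase.mpr ⟨fun h => (adj_LR.mp hw) ⟨rfl, h⟩, Finset.mem_univ _⟩, rfl⟩)
        · exact Finset.mem_insert_self _ _
      calc ((subdividedKkk k).neighborFinset (L 0)).card
          ≤ _ := Finset.card_le_card hsub
        _ ≤ ((Finset.univ.erase (0 : Fin k)).image (R (k := k))).card + 1 :=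
            Finset.card_insert_le _ _
        _ ≤ (Finset.univ.erase (0 : Fin k)).card + 1 :=
            Nat.add_le_add_right (Finset.card_image_le) 1
        _ = k := by
            rw [Finset.card_erase_of_mem (Finset.mem_univ _), Finset.card_univ, Fintype.card_fin]
            omega
    · have hsub : (subdividedKkk k).neighborFinset (L i) ⊆
          Finset.univ.image (R (k := k)) := by
        intro w hw
        rw [SimpleGraph.mem_neighborFinset] at hw
        rcases w with (⟨i'|j'⟩|u')
        · exact (not_adj_LL hw).elim
        · exact Finset.mem_image.mpr ⟨j', Finset.mem_univ _, rfl⟩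
        · exact absurd (adj_LU.mp hw) hi
      calc ((subdividedKkk k).neighborFinset (L i)).card
          ≤ _ := Finset.card_le_card hsub
        _ ≤ (Finset.univ : Finset (Fin k)).card := Finset.card_image_le
        _ = k := by rw [Finset.card_univ, Fintype.card_fin]
  · by_cases hj : j = 0
    · subst hj
      have hsub : (subdividedKkk k).neighborFinset (R 0) ⊆
          insert U ((Finset.univ.erase (0 : Fin k)).image (L (k := k))) := by
        intro w hw
        rw [SimpleGraph.mem_neighborFinset] at hw
        rcases w with (⟨i'|j'⟩|u')
        · refine Finset.mem_insert_of_mem (Finset.mem_image.mpr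
            ⟨i', Finset.mem_erase.mpr ⟨fun h => (adj_RL.mp hw) ⟨h, rfl⟩, Finset.mem_univ _⟩, rfl⟩)
        · exact (not_adj_RR hw).elim
        · exact Finset.mem_insert_self _ _
      calc ((subdividedKkk k).neighborFinset (R 0)).card
          ≤ _ := Finset.card_le_card hsub
        _ ≤ ((Finset.univ.erase (0 : Fin k)).image (L (k := k))).card + 1 :=
            Finset.card_insert_le _ _
        _ ≤ (Finset.univ.erase (0 : Fin k)).card + 1 :=
            Nat.add_le_add_right (Finset.card_image_le) 1
        _ = k := by
            rw [Finset.card_erase_of_mem (Finset.mem_univ _), Finset.card_univ, Fintype.card_fin]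
            omega
    · have hsub : (subdividedKkk k).neighborFinset (R j) ⊆
          Finset.univ.image (L (k := k)) := by
        intro w hw
        rw [SimpleGraph.mem_neighborFinset] at hw
        rcases w with (⟨i'|j'⟩|u')
        · exact Finset.mem_image.mpr ⟨i', Finset.mem_univ _, rfl⟩
        · exact (not_adj_RR hw).elim
        · exact absurd (adj_RU.mp hw) hj
      calc ((subdividedKkk k).neighborFinset (R j)).card
          ≤ _ := Finset.card_le_card hsub
        _ ≤ (Finset.univ : Finset (Fin k)).card := Finset.card_image_le
        _ = k := by rw [Finset.card_univ, Fintype.card_fin]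
  · have hsub : (subdividedKkk k).neighborFinset U ⊆ {L 0, R 0} := by
      intro w hw
      rw [SimpleGraph.mem_neighborFinset] at hw
      rcases w with (⟨i'|j'⟩|u')
      · obtain rfl := adj_UL.mp hw
        simp
      · obtain rfl := adj_UR.mp hw
        simp
      · exact (not_adj_UU hw).elim
    calc ((subdividedKkk k).neighborFinset U).card
        ≤ _ := Finset.card_le_card hsub
      _ ≤ 2 := by
          apply le_trans (Finset.card_insert_le _ _)
          simp
      _ ≤ k := by omega

lemma degree_L1 (hk : 3 ≤ k) [DecidableRel (subdividedKkk k).Adj] :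
    (subdividedKkk k).degree (L 1) = k := by
  obtain ⟨h1, _, _, _⟩ := consts hk
  rw [← SimpleGraph.card_neighborFinset_eq_degree]
  have : (subdividedKkk k).neighborFinset (L 1) = Finset.univ.image (R (k := k)) := by
    ext w
    rw [SimpleGraph.mem_neighborFinset]
    constructor
    · intro hw
      rcases w with (⟨i'|j'⟩|u')
      · exact (not_adj_LL hw).elim
      · exact Finset.mem_image.mpr ⟨j', Finset.mem_univ _, rfl⟩
      · exact absurd (adj_LU.mp hw) h1
    · intro hw
      obtain ⟨j, _, rfl⟩ := Finset.mem_image.mp hw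
      exact adj_LR.mpr (fun hc => h1 hc.1)
  rw [this, Finset.card_image_of_injective _ R_inj, Finset.card_univ, Fintype.card_fin]

lemma maxDegree_eq (hk : 3 ≤ k) [DecidableRel (subdividedKkk k).Adj] :
    (subdividedKkk k).maxDegree = k := by
  refine le_antisymm ((subdividedKkk k).maxDegree_le_of_forall_degree_le k (degree_le hk)) ?_
  exact le_of_eq_of_le (degree_L1 hk).symm (SimpleGraph.degree_le_maxDegree _ _)

end Deg

section Indep

lemma indep_card_le (hk : 3 ≤ k) (s : Finset (V k))
    (hs : IsIndep (subdividedKkk k) s) : s.card ≤ k := by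
  classical
  have hAdj : ∀ x ∈ s, ∀ y ∈ s, (subdividedKkk k).Adj x y → False := by
    intro x hx y hy h
    exact hs hx hy h.ne h
  by_cases hL : ∃ i : Fin k, i ≠ 0 ∧ L i ∈ s
  · obtain ⟨i, hi, hiS⟩ := hL
    have hR : ∀ j, R j ∉ s := fun j hj =>
      hAdj _ hiS _ hj (adj_LR.mpr (fun hc => hi hc.1))
    by_cases hU : U ∈ s
    · have hL0 : L 0 ∉ s := fun h => hAdj _ h _ hU (adj_LU.mpr rfl)
      have hsub : s ⊆ insert U ((Finset.univ.erase (0 : Fin k)).image (L (k := k))) := by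
        intro x hx
        rcases x with (⟨i'|j'⟩|u')
        · refine Finset.mem_insert_of_mem (Finset.mem_image.mpr
            ⟨i', Finset.mem_erase.mpr ⟨?_, Finset.mem_univ _⟩, rfl⟩)
          rintro rfl
          exact hL0 hx
        · exact absurd hx (hR j')
        · exact Finset.mem_insert_self _ _
      calc s.card ≤ _ := Finset.card_le_card hsub
        _ ≤ ((Finset.univ.erase (0 : Fin k)).image (L (k := k))).card + 1 :=
            Finset.card_insert_le _ _
        _ ≤ (Finset.univ.erase (0 : Fin k)).card + 1 :=
            Nat.add_le_add_right (Finset.card_image_le) 1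
        _ = k := by
            rw [Finset.card_erase_of_mem (Finset.mem_univ _), Finset.card_univ, Fintype.card_fin]
            omega
    · have hsub : s ⊆ Finset.univ.image (L (k := k)) := by
        intro x hx
        rcases x with (⟨i'|j'⟩|u')
        · exact Finset.mem_image.mpr ⟨i', Finset.mem_univ _, rfl⟩
        · exact absurd hx (hR j')
        · exact absurd hx hU
      calc s.card ≤ _ := Finset.card_le_card hsub
        _ ≤ (Finset.univ : Finset (Fin k)).card := Finset.card_image_le
        _ = k := by rw [Finset.card_univ, Fintype.card_fin]
  · push_neg at hL
    by_cases hRex : ∃ j : Fin k, j ≠ 0 ∧ R j ∈ s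
    · obtain ⟨j, hj, hjS⟩ := hRex
      have hLall : ∀ i, L i ∉ s := by
        intro i hi
        by_cases hi0 : i = 0
        · subst hi0
          exact hAdj _ hi _ hjS (adj_LR.mpr (fun hc => hj hc.2))
        · exact hL i hi0 hi
      by_cases hU : U ∈ s
      · have hR0 : R 0 ∉ s := fun h => hAdj _ h _ hU (adj_RU.mpr rfl)
        have hsub : s ⊆ insert U ((Finset.univ.erase (0 : Fin k)).image (R (k := k))) := by
          intro x hx
          rcases x with (⟨i'|j'⟩|u')
          · exact absurd hx (hLall i')
          · refine Finset.mem_insert_of_mem (Finset.mem_image.mpr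
              ⟨j', Finset.mem_erase.mpr ⟨?_, Finset.mem_univ _⟩, rfl⟩)
            rintro rfl
            exact hR0 hx
          · exact Finset.mem_insert_self _ _
        calc s.card ≤ _ := Finset.card_le_card hsub
          _ ≤ ((Finset.univ.erase (0 : Fin k)).image (R (k := k))).card + 1 :=
              Finset.card_insert_le _ _
          _ ≤ (Finset.univ.erase (0 : Fin k)).card + 1 :=
              Nat.add_le_add_right (Finset.card_image_le) 1
          _ = k := by
              rw [Finset.card_erase_of_mem (Finset.mem_univ _), Finset.card_univ,
                Fintype.card_fin]
              omega
      · have hsub : s ⊆ Finset.univ.image (R (k := k)) := by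
          intro x hx
          rcases x with (⟨i'|j'⟩|u')
          · exact absurd hx (hLall i')
          · exact Finset.mem_image.mpr ⟨j', Finset.mem_univ _, rfl⟩
          · exact absurd hx hU
        calc s.card ≤ _ := Finset.card_le_card hsub
          _ ≤ (Finset.univ : Finset (Fin k)).card := Finset.card_image_le
          _ = k := by rw [Finset.card_univ, Fintype.card_fin]
    · push_neg at hRex
      have hsub : s ⊆ {L 0, R 0, U} := by
        intro x hx
        rcases x with (⟨i'|j'⟩|u')
        · by_cases hi0 : i' = 0
          · subst hi0; simp
          · exact absurd hx (hL i' hi0)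
        · by_cases hj0 : j' = 0
          · subst hj0; simp
          · exact absurd hx (hRex j' hj0)
        · simp
      calc s.card ≤ _ := Finset.card_le_card hsub
        _ ≤ 3 := by
            apply le_trans (Finset.card_insert_le _ _)
            apply Nat.add_le_add_right (le_trans (Finset.card_insert_le _ _) _) 1
            simp
        _ ≤ k := by omega

lemma indep_left (hk : 3 ≤ k) : IsIndep (subdividedKkk k) (Finset.univ.image (L (k := k))) := by
  intro a ha b hb hne
  simp only [Finset.coe_image, Set.mem_image] at ha hb
  obtain ⟨i, _, rfl⟩ := ha
  obtain ⟨i', _, rfl⟩ := hb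
  exact not_adj_LL

lemma indepNum_eq (hk : 3 ≤ k) : _root_.indepNum (subdividedKkk k) = k := by
  classical
  apply le_antisymm
  · refine csSup_le ⟨0, ⟨∅, by simp [IsIndep], by simp⟩⟩ ?_
    rintro n ⟨t, ht, rfl⟩
    exact indep_card_le hk t ht
  · apply le_csSup
    · refine ⟨k, ?_⟩
      rintro n ⟨t, ht, rfl⟩
      exact indep_card_le hk t ht
    · refine ⟨Finset.univ.image (L (k := k)), indep_left hk, ?_⟩
      rw [Finset.card_image_of_injective _ L_inj, Finset.card_univ, Fintype.card_fin]

end Indep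

end Stmt14

/-- the subdivided K_{k,k} has 2k+1 vertices, independence number k,
chromatic index k+1, and is k-critical. -/
theorem stmt14 (k : ℕ) (hk : 3 ≤ k) :
    Fintype.card ((Fin k ⊕ Fin k) ⊕ Unit) = 2 * k + 1 ∧
    _root_.indepNum (subdividedKkk k) = k ∧
    chromIndex (subdividedKkk k) = k + 1 ∧
    @IsKCritical _ (subdividedKkk k) _ _ (Classical.decRel _) k := by
  haveI : NeZero k := ⟨by omega⟩
  refine ⟨Stmt14.card_V, Stmt14.indepNum_eq hk, Stmt14.chromIndex_subdivided hk, ?_, ?_, ?_⟩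
  · exact @Stmt14.maxDegree_eq k _ hk (Classical.decRel _)
  · exact Stmt14.chromIndex_subdivided hk
  · intro e he
    exact Stmt14.chromIndex_delete_all hk e he
end

section
/- Let k ≥ 3 and let H be the graph obtained from K_{k,k} by subdividing one edge. If a graph G is obtained from H by applying Meredith extension n times (in any order on any vertices), then |V(G)| = 2(k + nk − n) + 1 and G has an independent set of size k + n(k−1). Consequently α(G)/|V(G)| ≥ (k + n(k−1))/(2(k + n(k−1)) + 1), which tends to 1/2 as n → ∞. -/
open SimpleGraph Finset

/-- `H` is a Meredith extension of `G` (on some vertex, with some assignment of the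
neighbors of that vertex to the degree-(k-1) vertices of the attached K_{k,k-1}). -/
def IsMeredithExt (k : ℕ) {V W : Type} [Fintype V] [DecidableEq V]
    (G : SimpleGraph V) [DecidableRel G.Adj] (H : SimpleGraph W) : Prop :=
  G.maxDegree = k ∧
    ∃ (v : V) (f : V → Fin k), Set.InjOn f (G.neighborSet v) ∧
      Nonempty (H ≃g meredith G v k f)

/-- `MeredithIter k n H` : `H` is obtained (up to isomorphism) from the subdivided
`K_{k,k}` by applying Meredith extension `n` times. -/
def MeredithIter (k : ℕ) : (n : ℕ) → {W : Type} → SimpleGraph W → Prop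
  | 0, _, H => Nonempty (H ≃g subdividedKkk k)
  | n + 1, _, H =>
    ∃ (V : Type) (_ : Fintype V) (_ : DecidableEq V) (G : SimpleGraph V)
      (_ : DecidableRel G.Adj), MeredithIter k n G ∧ IsMeredithExt k G H

section Aux

private lemma indep_map' {V W : Type*} (G : SimpleGraph V) (H : SimpleGraph W) (e : G ≃g H)
    (s : Finset W) (hs : IsIndep H s) [DecidableEq V] :
    ∃ t : Finset V, IsIndep G t ∧ t.card = s.card := by
  refine ⟨s.image e.symm, ?_, Finset.card_image_of_injective _ e.symm.injective⟩
  intro a ha b hb hab hadj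
  simp only [Finset.coe_image, Set.mem_image, Finset.mem_coe] at ha hb
  obtain ⟨a', ha', rfl⟩ := ha
  obtain ⟨b', hb', rfl⟩ := hb
  have hH : H.Adj a' b' := by
    have h2 := e.map_adj_iff (v := e.symm a') (w := e.symm b')
    simp only [RelIso.apply_symm_apply] at h2
    exact h2.2 hadj
  exact hs ha' hb' (fun h => hab (by rw [h])) hH

private lemma meredith_indep' {V : Type*} [Fintype V] [DecidableEq V] (G : SimpleGraph V)
    (v : V) (k : ℕ) (hk : 1 ≤ k) (f : V → Fin k) (s : Finset V) (hs : IsIndep G s) :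
    ∃ t : Finset ({w : V // w ≠ v} ⊕ (Fin k ⊕ Fin (k - 1))),
      IsIndep (meredith G v k f) t ∧ t.card = s.card + (k - 1) := by
  by_cases hv : v ∈ s
  · refine ⟨((s.erase v).attach.image fun a =>
        Sum.inl ⟨a.1, (Finset.mem_erase.1 a.2).1⟩) ∪
        (Finset.univ.image fun i : Fin k => Sum.inr (Sum.inl i)), ?_, ?_⟩
    · intro x hx y hy hxy hadj
      simp only [Finset.coe_union, Set.mem_union, Finset.coe_image, Set.mem_image,
        Finset.mem_coe, Finset.mem_attach, Finset.mem_image, Finset.coe_univ,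
        Set.mem_univ, true_and, Finset.mem_univ] at hx hy
      rcases hx with ⟨a, _, rfl⟩ | ⟨i, _, rfl⟩ <;> rcases hy with ⟨b, _, rfl⟩ | ⟨j, _, rfl⟩
      · have hab : (a : V) ≠ (b : V) := by
          intro h; exact hxy (by rw [Sum.inl.injEq]; exact Subtype.ext h)
        have h1 := hs (Finset.mem_coe.2 (Finset.mem_of_mem_erase a.2))
          (Finset.mem_coe.2 (Finset.mem_of_mem_erase b.2)) hab
        have h2 := hs (Finset.mem_coe.2 (Finset.mem_of_mem_erase b.2))
          (Finset.mem_coe.2 (Finset.mem_of_mem_erase a.2)) hab.symm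
        simp only [meredith, SimpleGraph.fromRel_adj] at hadj
        tauto
      · have : ¬ G.Adj v (a : V) :=
          hs (Finset.mem_coe.2 hv) (Finset.mem_coe.2 (Finset.mem_of_mem_erase a.2))
            (Ne.symm (Finset.mem_erase.1 a.2).1)
        simp [meredith, this] at hadj
      · have : ¬ G.Adj v (b : V) :=
          hs (Finset.mem_coe.2 hv) (Finset.mem_coe.2 (Finset.mem_of_mem_erase b.2))
            (Ne.symm (Finset.mem_erase.1 b.2).1)
        simp [meredith, this] at hadj
      · simp [meredith] at hadj
    · rw [Finset.card_union_of_disjoint, Finset.card_image_of_injective,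
        Finset.card_image_of_injective, Finset.card_attach, Finset.card_univ,
        Fintype.card_fin, Finset.card_erase_of_mem hv]
      · have h1 : 1 ≤ s.card := Finset.card_pos.2 ⟨v, hv⟩
        omega
      · exact fun i j h => by simpa using h
      · intro a b h
        simp only [Sum.inl.injEq, Subtype.mk.injEq] at h
        exact Subtype.ext h
      · simp [Finset.disjoint_left]
  · refine ⟨(s.attach.image fun a => Sum.inl ⟨a.1, fun h => hv (h ▸ a.2)⟩) ∪
        (Finset.univ.image fun j : Fin (k-1) => Sum.inr (Sum.inr j)), ?_, ?_⟩
    · intro x hx y hy hxy hadj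
      simp only [Finset.coe_union, Set.mem_union, Finset.coe_image, Set.mem_image,
        Finset.mem_coe, Finset.mem_attach, Finset.coe_univ,
        Set.mem_univ, true_and] at hx hy
      rcases hx with ⟨a, _, rfl⟩ | ⟨i, _, rfl⟩ <;> rcases hy with ⟨b, _, rfl⟩ | ⟨j, _, rfl⟩
      · have hab : (a : V) ≠ (b : V) := by
          intro h; exact hxy (by rw [Sum.inl.injEq]; exact Subtype.ext h)
        have h1 := hs (Finset.mem_coe.2 a.2) (Finset.mem_coe.2 b.2) hab
        have h2 := hs (Finset.mem_coe.2 b.2) (Finset.mem_coe.2 a.2) hab.symm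
        simp only [meredith, SimpleGraph.fromRel_adj] at hadj
        tauto
      · simp [meredith] at hadj
      · simp [meredith] at hadj
      · simp [meredith] at hadj
    · rw [Finset.card_union_of_disjoint, Finset.card_image_of_injective,
        Finset.card_image_of_injective, Finset.card_attach, Finset.card_univ,
        Fintype.card_fin]
      · exact fun i j h => by simpa using h
      · intro a b h
        simp only [Sum.inl.injEq, Subtype.mk.injEq] at h
        exact Subtype.ext h
      · simp [Finset.disjoint_left]

private lemma meredithIter_aux (k : ℕ) (hk : 3 ≤ k) :
    ∀ (n : ℕ) {W : Type} [Fintype W] (G : SimpleGraph W), MeredithIter k n G →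
      Fintype.card W = 2 * (k + n * k - n) + 1 ∧
        ∃ s : Finset W, IsIndep G s ∧ s.card = k + n * (k - 1) := by
  intro n
  induction n with
  | zero =>
    intro W _ G h
    obtain ⟨e⟩ := h
    constructor
    · have := Fintype.card_congr e.toEquiv
      simp at this
      omega
    · classical
      have hind : IsIndep (subdividedKkk k)
          (Finset.univ.image fun i : Fin k => Sum.inl (Sum.inl i)) := by
        intro a ha b hb hab hadj
        simp only [Finset.coe_image, Set.mem_image, Finset.coe_univ, Set.mem_univ,
          true_and] at ha hb
        obtain ⟨i, rfl⟩ := ha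
        obtain ⟨j, rfl⟩ := hb
        simp [subdividedKkk] at hadj
      obtain ⟨t, ht, htc⟩ := indep_map' G (subdividedKkk k) e _ hind
      refine ⟨t, ht, ?_⟩
      rw [htc, Finset.card_image_of_injective, Finset.card_univ, Fintype.card_fin]
      · simp
      · intro i j h; simpa using h
  | succ n ih =>
    intro W _ G h
    obtain ⟨V, _, _, G', _, hG', hmax, v, f, hf, ⟨e⟩⟩ := h
    obtain ⟨hcV, s, hs, hsc⟩ := ih G' hG'
    constructor
    · have hcW := Fintype.card_congr e.toEquiv
      simp only [Fintype.card_sum, Fintype.card_fin, Fintype.card_subtype_compl,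
        Fintype.card_subtype_eq] at hcW
      have h1 : n ≤ n * k := Nat.le_mul_of_pos_right n (by omega)
      have h2 : (n + 1) * k = n * k + k := by ring
      omega
    · classical
      obtain ⟨t, ht, htc⟩ := meredith_indep' G' v k (by omega) f s hs
      obtain ⟨u, hu, huc⟩ := indep_map' G _ e t ht
      refine ⟨u, hu, ?_⟩
      rw [huc, htc, hsc]
      have h2 : (n + 1) * (k - 1) = n * (k - 1) + (k - 1) := by ring
      omega

end Aux

/-- after n Meredith extensions of the subdivided K_{k,k} one gets a graph
on 2(k+nk-n)+1 vertices with an independent set of k+n(k-1) vertices; hence the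
independence ratio is at least (k+n(k-1))/(2(k+n(k-1))+1), which tends to 1/2. -/


theorem stmt15 (k n : ℕ) (hk : 3 ≤ k) {W : Type} [Fintype W] (G : SimpleGraph W)
    (h : MeredithIter k n G) :
    Fintype.card W = 2 * (k + n * k - n) + 1 ∧
    (∃ s : Finset W, IsIndep G s ∧ s.card = k + n * (k - 1)) ∧
    ((k : ℝ) + (n : ℝ) * ((k : ℝ) - 1)) / (2 * ((k : ℝ) + (n : ℝ) * ((k : ℝ) - 1)) + 1)
      ≤ (_root_.indepNum G : ℝ) / (Fintype.card W : ℝ) ∧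
    Filter.Tendsto
      (fun m : ℕ =>
        ((k : ℝ) + (m : ℝ) * ((k : ℝ) - 1)) /
          (2 * ((k : ℝ) + (m : ℝ) * ((k : ℝ) - 1)) + 1))
      Filter.atTop (nhds (1 / 2)) := by
  obtain ⟨hcard, s, hs, hsc⟩ := meredithIter_aux k hk n G h
  refine ⟨hcard, ⟨s, hs, hsc⟩, ?_, ?_⟩
  · -- ratio bound
    have hA : (k + n * (k - 1) : ℕ) ≤ _root_.indepNum G := by
      apply le_csSup
      · refine ⟨Fintype.card W, ?_⟩
        rintro m ⟨t, -, rfl⟩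
        exact le_trans (Finset.card_le_univ t) (le_of_eq Finset.card_univ)
      · exact ⟨s, hs, hsc⟩
    have hk1 : 1 ≤ k := by omega
    have hAc : ((k + n * (k - 1) : ℕ) : ℝ) = (k : ℝ) + (n : ℝ) * ((k : ℝ) - 1) := by
      push_cast [Nat.cast_sub hk1]
      ring
    have hWc : ((Fintype.card W : ℕ) : ℝ)
        = 2 * ((k : ℝ) + (n : ℝ) * ((k : ℝ) - 1)) + 1 := by
      rw [hcard]
      have h1 : n * (k - 1) = n * k - n := by rw [Nat.mul_sub_one]
      have h2 : n ≤ n * k := Nat.le_mul_of_pos_right n (by omega)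
      have h3 : (k + n * k - n : ℕ) = (k + n * (k - 1) : ℕ) := by omega
      push_cast [h3, Nat.cast_sub hk1]
      ring
    rw [hWc]
    have hpos : (0 : ℝ) < 2 * ((k : ℝ) + (n : ℝ) * ((k : ℝ) - 1)) + 1 := by
      have h3 : (3 : ℝ) ≤ (k : ℝ) := by exact_mod_cast hk
      have hm : (0 : ℝ) ≤ (n : ℝ) := Nat.cast_nonneg n
      nlinarith
    rw [div_le_div_iff_of_pos_right hpos]
    calc (k : ℝ) + (n : ℝ) * ((k : ℝ) - 1) = ((k + n * (k - 1) : ℕ) : ℝ) := hAc.symm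
      _ ≤ (_root_.indepNum G : ℝ) := by exact_mod_cast hA
  · -- tendsto
    have h3 : (3 : ℝ) ≤ (k : ℝ) := by exact_mod_cast hk
    have hg : Filter.Tendsto (fun m : ℕ => 2 * (2 * ((k : ℝ) + m * ((k : ℝ) - 1)) + 1))
        Filter.atTop Filter.atTop := by
      apply Filter.tendsto_atTop_mono (fun m => ?_) tendsto_natCast_atTop_atTop
      have hm : (0 : ℝ) ≤ (m : ℝ) := Nat.cast_nonneg m
      nlinarith
    have h0 : Filter.Tendsto
        (fun m : ℕ => (2 * (2 * ((k : ℝ) + m * ((k : ℝ) - 1)) + 1))⁻¹)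
        Filter.atTop (nhds 0) := tendsto_inv_atTop_zero.comp hg
    have h1 : Filter.Tendsto
        (fun m : ℕ => 1 / 2 - (2 * (2 * ((k : ℝ) + m * ((k : ℝ) - 1)) + 1))⁻¹)
        Filter.atTop (nhds (1 / 2)) := by
      simpa using h0.const_sub (1 / 2 : ℝ)
    refine h1.congr fun m => ?_
    have hm : (0 : ℝ) ≤ (m : ℝ) := Nat.cast_nonneg m
    have hpos : (0 : ℝ) < 2 * ((k : ℝ) + m * ((k : ℝ) - 1)) + 1 := by nlinarith
    field_simp
    ring
end
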